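/- arXiv:2507.09994 — 2 statements merged into one kernel-verified Lean document; each statement's English description precedes it below -/
import Mathlib

section
/- Let v ∈ C¹(Ω, ℝ) be a solution of the GHJB equation ⟨f(x)+g(x)u(x), ∇v(x)⟩ + h(x) + ⟨u(x), R u(x)⟩ = 0 on Ω, and define the updated controller u⁺(x) := −(1/2) R^{−1} g(x)^⊤ ∇v(x). Then along the closed-loop vector field f + g u⁺, the derivative of v satisfies ⟨f(x) + g(x)u⁺(x), ∇v(x)⟩ = −‖R^{1/2}(u⁺(x) − u(x))‖² − ‖R^{1/2} u⁺(x)‖² − h(x), which is strictly negative for all x ∈ Ω \ {0}. -/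
open Filter Metric
open scoped RealInnerProductSpace

/-!
Writing `w := u⁺`, the definition of `u⁺` says exactly that `g(x)ᵀ ∇v(x) = -2 R w`, i.e.
`⟪g(x) b, ∇v(x)⟫ = -2 ⟪b, R w⟫` for every control `b`. Substituting this for `b = u` into the
GHJB equation and for `b = w` into the closed-loop derivative, the difference of the two is a
quadratic expression in `u` and `w` which completes to `-⟪w - u, R (w - u)⟫`. Positivity of `R`
and of `h` away from the origin then makes the right-hand side negative.
-/

section

variable {E : Type*} [NormedAddCommGroup E] [InnerProductSpace ℝ E]

lemma inner_apply_self_nonneg_of_pos {R : E →L[ℝ] E} (hRpos : ∀ a, a ≠ 0 → 0 < ⟪a, R a⟫)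
    (a : E) : 0 ≤ ⟪a, R a⟫ := by
  rcases eq_or_ne a 0 with rfl | ha
  · simp
  · exact (hRpos a ha).le

lemma inner_apply_eq_neg_two_mul_of_eq_neg_half_smul {F : Type*} [NormedAddCommGroup F]
    [InnerProductSpace ℝ F] [CompleteSpace E] [CompleteSpace F] {G : E →L[ℝ] F}
    {R Rinv : E →L[ℝ] E} (hRinv' : ∀ a, R (Rinv a) = a) {p : F} {w : E}
    (hw : w = -(1 / 2 : ℝ) • Rinv (ContinuousLinearMap.adjoint G p)) (b : E) :
    ⟪G b, p⟫ = -2 * ⟪b, R w⟫ := by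
  have hadj : ContinuousLinearMap.adjoint G p = (-2 : ℝ) • R w := by
    rw [hw, map_smul, hRinv', smul_smul]
    norm_num
  rw [← ContinuousLinearMap.adjoint_inner_right, hadj, real_inner_smul_right]

lemma inner_add_apply_eq_neg_sub_of_ghjb {F : Type*} [NormedAddCommGroup F]
    [InnerProductSpace ℝ F] {R : E →L[ℝ] E} (hRsymm : ∀ a b, ⟪R a, b⟫ = ⟪a, R b⟫)
    {G : E →L[ℝ] F} {y p : F} {u w : E} {c : ℝ} (hG : ∀ b, ⟪G b, p⟫ = -2 * ⟪b, R w⟫)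
    (hGHJB : ⟪y + G u, p⟫ + c + ⟪u, R u⟫ = 0) :
    ⟪y + G w, p⟫ = -⟪w - u, R (w - u)⟫ - ⟪w, R w⟫ - c := by
  have hcross : ⟪w, R u⟫ = ⟪u, R w⟫ := by rw [real_inner_comm, hRsymm]
  rw [inner_add_left, hG] at hGHJB ⊢
  rw [map_sub, inner_sub_left, inner_sub_right, inner_sub_right]
  linarith

end

theorem stmt_10_general {N M : ℕ}
    (Ω : Set (EuclideanSpace ℝ (Fin N)))
    (f : EuclideanSpace ℝ (Fin N) → EuclideanSpace ℝ (Fin N))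
    (g : EuclideanSpace ℝ (Fin N) → (EuclideanSpace ℝ (Fin M) →L[ℝ] EuclideanSpace ℝ (Fin N)))
    (h : EuclideanSpace ℝ (Fin N) → ℝ)
    (hhpos : ∀ x, x ≠ 0 → 0 < h x)
    (R Rinv : EuclideanSpace ℝ (Fin M) →L[ℝ] EuclideanSpace ℝ (Fin M))
    (hRsymm : ∀ a b, ⟪R a, b⟫ = ⟪a, R b⟫)
    (hRpos : ∀ a : EuclideanSpace ℝ (Fin M), a ≠ 0 → 0 < ⟪a, R a⟫)
    (hRinv' : ∀ a, R (Rinv a) = a)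
    (u : EuclideanSpace ℝ (Fin N) → EuclideanSpace ℝ (Fin M))
    (v : EuclideanSpace ℝ (Fin N) → ℝ)
    -- `v` solves the GHJB equation associated with `u` on Ω
    (hGHJB : ∀ x ∈ Ω, ⟪f x + g x (u x), gradient v x⟫ + h x + ⟪u x, R (u x)⟫ = 0)
    -- the updated controller
    (uplus : EuclideanSpace ℝ (Fin N) → EuclideanSpace ℝ (Fin M))
    (huplus : ∀ x, uplus x =
      -(1 / 2 : ℝ) • Rinv ((ContinuousLinearMap.adjoint (g x)) (gradient v x))) :
    ∀ x ∈ Ω,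
      (⟪f x + g x (uplus x), gradient v x⟫ =
        -⟪uplus x - u x, R (uplus x - u x)⟫ - ⟪uplus x, R (uplus x)⟫ - h x) ∧
      (x ≠ 0 → ⟪f x + g x (uplus x), gradient v x⟫ < 0) := by
  intro x hx
  have hidentity := inner_add_apply_eq_neg_sub_of_ghjb hRsymm
    (inner_apply_eq_neg_two_mul_of_eq_neg_half_smul hRinv' (huplus x)) (hGHJB x hx)
  refine ⟨hidentity, fun hx0 => ?_⟩
  rw [hidentity]
  linarith [hhpos x hx0, inner_apply_self_nonneg_of_pos hRpos (uplus x - u x),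
    inner_apply_self_nonneg_of_pos hRpos (uplus x)]

theorem stmt_10 {N M : ℕ}
    (Ω : Set (EuclideanSpace ℝ (Fin N)))
    (hΩopen : IsOpen Ω) (hΩconn : IsConnected Ω)
    (f : EuclideanSpace ℝ (Fin N) → EuclideanSpace ℝ (Fin N))
    (g : EuclideanSpace ℝ (Fin N) → (EuclideanSpace ℝ (Fin M) →L[ℝ] EuclideanSpace ℝ (Fin N)))
    (h : EuclideanSpace ℝ (Fin N) → ℝ)
    (hhpos : ∀ x, x ≠ 0 → 0 < h x)
    (R Rinv : EuclideanSpace ℝ (Fin M) →L[ℝ] EuclideanSpace ℝ (Fin M))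
    (hRsymm : ∀ a b, ⟪R a, b⟫ = ⟪a, R b⟫)
    (hRpos : ∀ a : EuclideanSpace ℝ (Fin M), a ≠ 0 → 0 < ⟪a, R a⟫)
    (hRinv : ∀ a, Rinv (R a) = a) (hRinv' : ∀ a, R (Rinv a) = a)
    (u : EuclideanSpace ℝ (Fin N) → EuclideanSpace ℝ (Fin M))
    (v : EuclideanSpace ℝ (Fin N) → ℝ)
    (hv : ContDiffOn ℝ 1 v Ω)
    -- `v` solves the GHJB equation associated with `u` on Ω
    (hGHJB : ∀ x ∈ Ω, ⟪f x + g x (u x), gradient v x⟫ + h x + ⟪u x, R (u x)⟫ = 0)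
    -- the updated controller
    (uplus : EuclideanSpace ℝ (Fin N) → EuclideanSpace ℝ (Fin M))
    (huplus : ∀ x, uplus x =
      -(1 / 2 : ℝ) • Rinv ((ContinuousLinearMap.adjoint (g x)) (gradient v x))) :
    ∀ x ∈ Ω,
      (⟪f x + g x (uplus x), gradient v x⟫ =
        -⟪uplus x - u x, R (uplus x - u x)⟫ - ⟪uplus x, R (uplus x)⟫ - h x) ∧
      (x ≠ 0 → ⟪f x + g x (uplus x), gradient v x⟫ < 0) :=
  stmt_10_general Ω f g h hhpos R Rinv hRsymm hRpos hRinv' u v hGHJB uplus huplus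
end

section
/- In the policy iteration: let (u_s, Ω_s) be an admissible controller–domain pair, v_s the value function of u_s (solving the GHJB equation on Ω_s), and u_{s+1}(x) = −(1/2)R^{−1}g(x)^⊤∇v_s(x). Then for every x ∈ Ω_s (assuming the trajectory under u_{s+1} starting at x stays in Ω_s and converges to 0, and v_{s+1} is the value function of u_{s+1}), the monotonicity v*(x) ≤ v_{s+1}(x) ≤ v_s(x) holds, where v* is the optimal value function. -/
open Filter Metric MeasureTheory
open scoped RealInnerProductSpace

theorem stmt_15 {N M : ℕ}
    (f : EuclideanSpace ℝ (Fin N) → EuclideanSpace ℝ (Fin N))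
    (g : EuclideanSpace ℝ (Fin N) → (EuclideanSpace ℝ (Fin M) →L[ℝ] EuclideanSpace ℝ (Fin N)))
    (h : EuclideanSpace ℝ (Fin N) → ℝ)
    (R Rinv : EuclideanSpace ℝ (Fin M) →L[ℝ] EuclideanSpace ℝ (Fin M))
    (hf : ContDiff ℝ (⊤ : ℕ∞) f) (hg : ContDiff ℝ (⊤ : ℕ∞) g) (hh : ContDiff ℝ (⊤ : ℕ∞) h)
    (hf0 : f 0 = 0) (hh0 : h 0 = 0) (hhpos : ∀ x, x ≠ 0 → 0 < h x)
    (hRsymm : ∀ a b, ⟪R a, b⟫ = ⟪a, R b⟫)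
    (hRpos : ∀ a : EuclideanSpace ℝ (Fin M), a ≠ 0 → 0 < ⟪a, R a⟫)
    (hRinv : ∀ a, Rinv (R a) = a) (hRinv' : ∀ a, R (Rinv a) = a)
    -- the optimal value function
    (vstar : EuclideanSpace ℝ (Fin N) → ℝ)
    (hvstar : ∀ x, vstar x = sInf {J : ℝ |
      ∃ (w : ℝ → EuclideanSpace ℝ (Fin M)) (Y : ℝ → EuclideanSpace ℝ (Fin N)),
        Measurable w ∧ (∃ Mb : ℝ, ∀ t : ℝ, ‖w t‖ ≤ Mb) ∧ Y 0 = x ∧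
        (∀ t : ℝ, 0 ≤ t → HasDerivAt Y (f (Y t) + g (Y t) (w t)) t) ∧
        IntegrableOn (fun t => h (Y t) + ⟪w t, R (w t)⟫) (Set.Ioi (0 : ℝ)) ∧
        J = ∫ t in Set.Ioi (0 : ℝ), (h (Y t) + ⟪w t, R (w t)⟫)})
    -- the admissible pair (uₛ, Ωₛ) with closed-loop flow Xs
    (Ωs : Set (EuclideanSpace ℝ (Fin N)))
    (hΩopen : IsOpen Ωs) (hΩconn : IsConnected Ωs)
    (hΩ0 : (0 : EuclideanSpace ℝ (Fin N)) ∈ Ωs)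
    (us : EuclideanSpace ℝ (Fin N) → EuclideanSpace ℝ (Fin M))
    (hus : ContDiffOn ℝ (⊤ : ℕ∞) us Ωs) (hus0 : us 0 = 0)
    (Xs : ℝ → EuclideanSpace ℝ (Fin N) → EuclideanSpace ℝ (Fin N))
    (hXs0 : ∀ x ∈ Ωs, Xs 0 x = x)
    (hXsode : ∀ x ∈ Ωs, ∀ t : ℝ, 0 ≤ t →
      HasDerivAt (fun s => Xs s x) (f (Xs t x) + g (Xs t x) (us (Xs t x))) t)
    (hXsinv : ∀ x ∈ Ωs, ∀ t : ℝ, 0 ≤ t → Xs t x ∈ Ωs)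
    (hXsstab : ∀ x ∈ Ωs, Tendsto (fun t => ‖Xs t x‖) atTop (nhds 0))
    -- vₛ is the value function of uₛ and solves the GHJB equation on Ωₛ
    (vs : EuclideanSpace ℝ (Fin N) → ℝ)
    (hvsInt : ∀ x ∈ Ωs, IntegrableOn
      (fun t => h (Xs t x) + ⟪us (Xs t x), R (us (Xs t x))⟫) (Set.Ioi (0 : ℝ)))
    (hvs : ∀ x ∈ Ωs, vs x =
      ∫ t in Set.Ioi (0 : ℝ), (h (Xs t x) + ⟪us (Xs t x), R (us (Xs t x))⟫))
    (hvsC1 : ContDiffOn ℝ 1 vs Ωs)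
    (hGHJB : ∀ x ∈ Ωs, ⟪f x + g x (us x), gradient vs x⟫ + h x + ⟪us x, R (us x)⟫ = 0)
    -- the updated controller u_{s+1} and its closed-loop flow Xs1
    (us1 : EuclideanSpace ℝ (Fin N) → EuclideanSpace ℝ (Fin M))
    (hus1 : ∀ x, us1 x =
      -(1 / 2 : ℝ) • Rinv ((ContinuousLinearMap.adjoint (g x)) (gradient vs x)))
    (Xs1 : ℝ → EuclideanSpace ℝ (Fin N) → EuclideanSpace ℝ (Fin N))
    (hXs10 : ∀ x ∈ Ωs, Xs1 0 x = x)
    (hXs1ode : ∀ x ∈ Ωs, ∀ t : ℝ, 0 ≤ t →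
      HasDerivAt (fun s => Xs1 s x) (f (Xs1 t x) + g (Xs1 t x) (us1 (Xs1 t x))) t)
    (hXs1inv : ∀ x ∈ Ωs, ∀ t : ℝ, 0 ≤ t → Xs1 t x ∈ Ωs)
    (hXs1stab : ∀ x ∈ Ωs, Tendsto (fun t => ‖Xs1 t x‖) atTop (nhds 0))
    -- v_{s+1} is the value function of u_{s+1}
    (vs1 : EuclideanSpace ℝ (Fin N) → ℝ)
    (hvs1Int : ∀ x ∈ Ωs, IntegrableOn
      (fun t => h (Xs1 t x) + ⟪us1 (Xs1 t x), R (us1 (Xs1 t x))⟫) (Set.Ioi (0 : ℝ)))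
    (hvs1 : ∀ x ∈ Ωs, vs1 x =
      ∫ t in Set.Ioi (0 : ℝ), (h (Xs1 t x) + ⟪us1 (Xs1 t x), R (us1 (Xs1 t x))⟫)) :
    ∀ x ∈ Ωs, vstar x ≤ vs1 x ∧ vs1 x ≤ vs x := by
  intro x hx
  have hhnn : ∀ z, 0 ≤ h z := by
    intro z
    rcases eq_or_ne z 0 with rfl | hz
    · exact le_of_eq hh0.symm
    · exact (hhpos z hz).le
  have hRnn : ∀ a : EuclideanSpace ℝ (Fin M), 0 ≤ ⟪a, R a⟫ := by
    intro a
    rcases eq_or_ne a 0 with rfl | ha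
    · simp
    · exact (hRpos a ha).le
  have hIntNN : ∀ (w : ℝ → EuclideanSpace ℝ (Fin M)) (Y : ℝ → EuclideanSpace ℝ (Fin N)),
      (0:ℝ) ≤ ∫ t in Set.Ioi (0:ℝ), (h (Y t) + ⟪w t, R (w t)⟫) := by
    intro w Y
    exact setIntegral_nonneg measurableSet_Ioi fun t _ => add_nonneg (hhnn _) (hRnn _)
  -- continuity facts
  have hgradcont : ContinuousOn (fun z => gradient vs z) Ωs := by
    have h1 := hvsC1.continuousOn_fderiv_of_isOpen hΩopen le_rfl
    exact (InnerProductSpace.toDual ℝ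
      (EuclideanSpace ℝ (Fin N))).symm.continuous.comp_continuousOn h1
  have hus1cont : ContinuousOn us1 Ωs := by
    have hadj : Continuous fun z => ContinuousLinearMap.adjoint (g z) :=
      ContinuousLinearMap.adjoint.continuous.comp hg.continuous
    have h2 : ContinuousOn
        (fun z => (ContinuousLinearMap.adjoint (g z)) (gradient vs z)) Ωs :=
      hadj.continuousOn.clm_apply hgradcont
    have h3 : ContinuousOn (fun z =>
        -(1/2 : ℝ) • Rinv ((ContinuousLinearMap.adjoint (g z)) (gradient vs z))) Ωs :=
      by have := (Rinv.continuous.comp_continuousOn h2).const_smul (-(1/2 : ℝ) : ℝ); exact this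
    exact h3.congr fun z _ => hus1 z
  have hmem : ∀ t : ℝ, Xs1 (max t 0) x ∈ Ωs := fun t => hXs1inv x hx _ (le_max_right _ _)
  have hYcont : Continuous fun t : ℝ => Xs1 (max t 0) x := by
    rw [continuous_iff_continuousAt]
    intro t
    have h1 : ContinuousAt (fun s => Xs1 s x) (max t 0) :=
      (hXs1ode x hx _ (le_max_right t 0)).continuousAt
    have hmax : Continuous fun t : ℝ => max t 0 := continuous_id.max continuous_const
    exact ContinuousAt.comp (g := fun s => Xs1 s x) (f := fun t : ℝ => max t 0) h1
      hmax.continuousAt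
  have hWcont : Continuous fun t : ℝ => us1 (Xs1 (max t 0) x) :=
    hus1cont.comp_continuous hYcont hmem
  have hrcont : Continuous fun t : ℝ =>
      h (Xs1 (max t 0) x) + ⟪us1 (Xs1 (max t 0) x), R (us1 (Xs1 (max t 0) x))⟫ :=
    (hh.continuous.comp hYcont).add (hWcont.inner (R.continuous.comp hWcont))
  -- algebra
  have hadjR : ∀ z, (ContinuousLinearMap.adjoint (g z)) (gradient vs z)
      = (-2 : ℝ) • R (us1 z) := by
    intro z
    have h1 : R (us1 z) = -(1/2 : ℝ) • (ContinuousLinearMap.adjoint (g z)) (gradient vs z) := by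
      rw [hus1 z, _root_.map_smul, hRinv']
    rw [h1, smul_smul]
    norm_num
  have hsym : ∀ a b : EuclideanSpace ℝ (Fin M), ⟪a, R b⟫ = ⟪b, R a⟫ := by
    intro a b; rw [← hRsymm, real_inner_comm]
  have halg : ∀ z ∈ Ωs, ⟪gradient vs z, f z + g z (us1 z)⟫ =
      -(h z + ⟪us1 z, R (us1 z)⟫) - ⟪us1 z - us z, R (us1 z - us z)⟫ := by
    intro z hz
    have hg0 := hGHJB z hz
    have e1 : g z (us1 z) = g z (us z) + g z (us1 z - us z) := by
      rw [← map_add]; congr 1; abel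
    have e2 : ⟪gradient vs z, g z (us1 z - us z)⟫
        = ⟪us1 z - us z, (-2:ℝ) • R (us1 z)⟫ := by
      rw [← hadjR z, ContinuousLinearMap.adjoint_inner_right]
      exact real_inner_comm _ _
    have e3 : ⟪gradient vs z, f z + g z (us z)⟫ = -(h z + ⟪us z, R (us z)⟫) := by
      rw [real_inner_comm]; linarith
    have e4 : ⟪gradient vs z, f z + g z (us1 z)⟫
        = ⟪gradient vs z, f z + g z (us z)⟫ + ⟪gradient vs z, g z (us1 z - us z)⟫ := by
      rw [← inner_add_right]
      congr 1
      rw [e1]; abel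
    rw [e4, e3, e2]
    have h1 : ⟪us z, R (us1 z)⟫ = ⟪us1 z, R (us z)⟫ := hsym _ _
    simp only [real_inner_smul_right, map_sub, inner_sub_left, inner_sub_right]
    linarith
  -- chain rule along the u_{s+1} trajectory
  have hchain : ∀ t : ℝ, 0 ≤ t → HasDerivAt (fun s => vs (Xs1 s x))
      (⟪gradient vs (Xs1 t x), f (Xs1 t x) + g (Xs1 t x) (us1 (Xs1 t x))⟫) t := by
    intro t ht
    have hy := hXs1inv x hx t ht
    have hdiff : DifferentiableAt ℝ vs (Xs1 t x) :=
      (hvsC1.differentiableOn one_ne_zero).differentiableAt (hΩopen.mem_nhds hy)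
    have h1 := hdiff.hasFDerivAt.comp_hasDerivAt t (hXs1ode x hx t ht)
    rw [inner_gradient_left (𝕜 := ℝ) (F := EuclideanSpace ℝ (Fin N)) (f := vs)]
    exact h1
  set r : ℝ → ℝ := fun t =>
    h (Xs1 (max t 0) x) + ⟪us1 (Xs1 (max t 0) x), R (us1 (Xs1 (max t 0) x))⟫ with hrdef
  have hr_eq : ∀ t : ℝ, 0 ≤ t →
      r t = h (Xs1 t x) + ⟪us1 (Xs1 t x), R (us1 (Xs1 t x))⟫ := by
    intro t ht; simp only [hrdef, max_eq_left ht]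
  have hIntDeriv : ∀ T : ℝ, HasDerivAt (fun u => ∫ t in (0:ℝ)..u, r t) (r T) T :=
    fun T => (hrcont.integral_hasStrictDerivAt 0 T).hasDerivAt
  set F : ℝ → ℝ := fun T => vs (Xs1 (max T 0) x) + ∫ t in (0:ℝ)..T, r t with hFdef
  have hFderiv : ∀ T : ℝ, 0 < T → HasDerivAt F
      (⟪gradient vs (Xs1 T x), f (Xs1 T x) + g (Xs1 T x) (us1 (Xs1 T x))⟫ + r T) T := by
    intro T hT
    have h1 : (fun S => vs (Xs1 (max S 0) x)) =ᶠ[nhds T] fun S => vs (Xs1 S x) := by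
      filter_upwards [eventually_gt_nhds hT] with S hS
      rw [max_eq_left hS.le]
    have h2 := (hchain T hT.le).congr_of_eventuallyEq h1
    exact h2.add (hIntDeriv T)
  have hFcont : Continuous F := by
    have h1 : Continuous fun T => vs (Xs1 (max T 0) x) :=
      hvsC1.continuousOn.comp_continuous hYcont hmem
    have h2 : Differentiable ℝ fun T => ∫ t in (0:ℝ)..T, r t :=
      fun T => (hIntDeriv T).differentiableAt
    exact h1.add h2.continuous
  have hFanti : AntitoneOn F (Set.Ici (0:ℝ)) := by
    apply antitoneOn_of_deriv_nonpos (convex_Ici 0) hFcont.continuousOn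
    · intro T hT
      rw [interior_Ici] at hT
      exact (hFderiv T hT).differentiableAt.differentiableWithinAt
    · intro T hT
      rw [interior_Ici] at hT
      rw [(hFderiv T hT).deriv]
      have hyT := hXs1inv x hx T hT.le
      rw [halg _ hyT, hr_eq T hT.le]
      have := hRnn (us1 (Xs1 T x) - us (Xs1 T x))
      linarith
  have hF0 : F 0 = vs x := by
    simp only [hFdef, max_self, intervalIntegral.integral_same, add_zero, hXs10 x hx]
  have hbound : ∀ T : ℝ, 0 ≤ T →
      (∫ t in (0:ℝ)..T, r t) ≤ vs x - vs (Xs1 (max T 0) x) := by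
    intro T hT
    have h1 := hFanti Set.self_mem_Ici (Set.mem_Ici.mpr hT) hT
    rw [hF0] at h1
    simp only [hFdef] at h1
    linarith
  have hrInt : IntegrableOn r (Set.Ioi (0:ℝ)) :=
    (hvs1Int x hx).congr_fun
      (fun t ht => (hr_eq t (le_of_lt (Set.mem_Ioi.mp ht))).symm) measurableSet_Ioi
  have hlim1 : Tendsto (fun T => ∫ t in (0:ℝ)..T, r t) atTop
      (nhds (∫ t in Set.Ioi (0:ℝ), r t)) :=
    MeasureTheory.intervalIntegral_tendsto_integral_Ioi 0 hrInt tendsto_id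
  have htraj0 : Tendsto (fun T : ℝ => Xs1 (max T 0) x) atTop (nhds 0) := by
    have h1 : Tendsto (fun T : ℝ => Xs1 T x) atTop (nhds 0) :=
      tendsto_zero_iff_norm_tendsto_zero.mpr (hXs1stab x hx)
    exact h1.comp (tendsto_atTop_mono (fun T => le_max_left T 0) tendsto_id)
  have hlim2 : Tendsto (fun T : ℝ => vs (Xs1 (max T 0) x)) atTop (nhds (vs 0)) :=
    ((hvsC1.continuousOn.continuousAt (hΩopen.mem_nhds hΩ0)).tendsto).comp htraj0
  have hineq : (∫ t in Set.Ioi (0:ℝ), r t) ≤ vs x - vs 0 := by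
    refine le_of_tendsto_of_tendsto hlim1 (tendsto_const_nhds.sub hlim2) ?_
    filter_upwards [eventually_ge_atTop (0:ℝ)] with T hT
    exact hbound T hT
  have hvs0 : 0 ≤ vs 0 := by
    rw [hvs 0 hΩ0]
    exact setIntegral_nonneg measurableSet_Ioi fun t _ => add_nonneg (hhnn _) (hRnn _)
  have hrInt_eq : (∫ t in Set.Ioi (0:ℝ), r t) = vs1 x := by
    rw [hvs1 x hx]
    exact setIntegral_congr_fun measurableSet_Ioi
      fun t ht => hr_eq t (le_of_lt (Set.mem_Ioi.mp ht))
  have part2 : vs1 x ≤ vs x := by linarith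
  refine ⟨?_, part2⟩
  rw [hvstar x]
  apply csInf_le
  · refine ⟨0, ?_⟩
    rintro J ⟨w, Y, -, -, -, -, -, rfl⟩
    exact hIntNN w Y
  · refine ⟨fun t => us1 (Xs1 (max t 0) x), fun t => Xs1 t x, hWcont.measurable,
      ?_, hXs10 x hx, ?_, ?_, ?_⟩
    · -- boundedness of the control
      have hwlim : Tendsto (fun t : ℝ => ‖us1 (Xs1 (max t 0) x)‖) atTop (nhds ‖us1 0‖) :=
        (((hus1cont.continuousAt (hΩopen.mem_nhds hΩ0)).tendsto).comp htraj0).norm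
      obtain ⟨T, hT⟩ := Filter.eventually_atTop.mp
        (hwlim.eventually (eventually_le_nhds (lt_add_one ‖us1 0‖)))
      obtain ⟨C, hC⟩ := (isCompact_Icc :
        IsCompact (Set.Icc (0:ℝ) (max T 0))).exists_bound_of_continuousOn hWcont.continuousOn
      refine ⟨max C (‖us1 0‖ + 1), fun t => ?_⟩
      rcases le_or_gt t (max T 0) with h1 | h1
      · have hmem' : max t 0 ∈ Set.Icc (0:ℝ) (max T 0) :=
          ⟨le_max_right _ _, max_le h1 (le_max_right T 0)⟩
        have h2 := hC (max t 0) hmem'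
        simp only [max_eq_left (le_max_right t 0)] at h2
        exact le_trans h2 (le_max_left _ _)
      · have h2 := hT t (le_trans (le_max_left T 0) h1.le)
        exact le_trans h2 (le_max_right _ _)
    · intro t ht
      have h1 := hXs1ode x hx t ht
      simpa [max_eq_left ht] using h1
    · exact (hvs1Int x hx).congr_fun
        (fun t ht => by simp [max_eq_left (le_of_lt (Set.mem_Ioi.mp ht))]) measurableSet_Ioi
    · rw [hvs1 x hx]
      exact setIntegral_congr_fun measurableSet_Ioi
        fun t ht => by simp [max_eq_left (le_of_lt (Set.mem_Ioi.mp ht))]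
end
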